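/- arXiv:1507.04993 — 4 statements merged into one kernel-verified Lean document; each statement's English description precedes it below -/
import Mathlib

section
/- Let ℓ ≥ 1 and let c₁, c₂ be nonzero complex numbers such that (c₂ − c₁)^{3^ℓ} = (−c₁)^{3^ℓ} and (c₁ − c₂)^{3^ℓ} = (−c₂)^{3^ℓ}. Then a contradiction arises; i.e., no such nonzero c₁, c₂ with c₁ ≠ c₂ exist. -/
/-! Put `a = c₁ / (c₁ - c₂)` and `b = c₂ / (c₂ - c₁)`. Since `3 ^ ℓ` is odd, the hypotheses say
`a ^ (3 ^ ℓ) = b ^ (3 ^ ℓ) = 1`, so `a` and `b` lie on the unit circle; but `a + b = 1`, which forces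
`a` to be a primitive sixth root of unity, and no primitive sixth root of unity has odd order. -/

theorem div_sub_pow_eq_one_of_odd {K : Type*} [Field K] {n : ℕ} (hn : Odd n) {c d : K}
    (hne : c ≠ d) (h : (d - c) ^ n = (-c) ^ n) : (c / (c - d)) ^ n = 1 := by
  have hcd : (c - d) ^ n = c ^ n := by
    rw [← neg_sub, hn.neg_pow, hn.neg_pow] at h
    exact neg_injective h
  rw [div_pow, ← hcd, div_self (pow_ne_zero _ (sub_ne_zero.mpr hne))]

open ComplexConjugate in
theorem Complex.pow_three_eq_neg_one_of_add_eq_one {a b : ℂ} (ha : ‖a‖ = 1) (hb : ‖b‖ = 1)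
    (hab : a + b = 1) : a ^ 3 = -1 := by
  have unit_of_norm {z : ℂ} (hz : ‖z‖ = 1) : z * conj z = 1 := by
    rw [mul_conj, normSq_eq_norm_sq, hz]; norm_num
  have ha' := unit_of_norm ha
  have hb' := unit_of_norm hb
  rw [← sub_eq_of_eq_add' hab.symm, map_sub, map_one] at hb'
  have hconj : conj a = 1 - a := by linear_combination ha' - hb'
  rw [hconj] at ha'
  linear_combination (-a - 1) * ha'

theorem neg_one_eq_one_of_pow_three_eq_neg_one {M : Type*} [Monoid M] [HasDistribNeg M]
    {n : ℕ} (hn : Odd n) {a : M} (h3 : a ^ 3 = -1) (h : a ^ n = 1) : (-1 : M) = 1 := by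
  calc (-1 : M) = (a ^ 3) ^ n := by rw [h3, hn.neg_one_pow]
    _ = (a ^ n) ^ 3 := by rw [← pow_mul, ← pow_mul, mul_comm]
    _ = 1 := by rw [h, one_pow]

theorem stmt1_general (ℓ : ℕ) (c₁ c₂ : ℂ)
    (hne : c₁ ≠ c₂)
    (e1 : (c₂ - c₁) ^ (3 ^ ℓ) = (-c₁) ^ (3 ^ ℓ))
    (e2 : (c₁ - c₂) ^ (3 ^ ℓ) = (-c₂) ^ (3 ^ ℓ)) : False := by
  have hodd : Odd (3 ^ ℓ) := Odd.pow (by decide)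
  have hn : 3 ^ ℓ ≠ 0 := pow_ne_zero _ three_ne_zero
  have ha := div_sub_pow_eq_one_of_odd hodd hne e1
  have hb := div_sub_pow_eq_one_of_odd hodd hne.symm e2
  have hab : c₁ / (c₁ - c₂) + c₂ / (c₂ - c₁) = 1 := by
    rw [← neg_sub c₁ c₂, div_neg, ← sub_eq_add_neg, ← sub_div, div_self (sub_ne_zero.mpr hne)]
  have ha3 := Complex.pow_three_eq_neg_one_of_add_eq_one
    (Complex.norm_eq_one_of_pow_eq_one ha hn) (Complex.norm_eq_one_of_pow_eq_one hb hn) hab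
  have := neg_one_eq_one_of_pow_three_eq_neg_one hodd ha3 ha
  norm_num at this

theorem stmt1 (ℓ : ℕ) (hℓ : 1 ≤ ℓ) (c₁ c₂ : ℂ) (hc₁ : c₁ ≠ 0) (hc₂ : c₂ ≠ 0)
    (hne : c₁ ≠ c₂)
    (e1 : (c₂ - c₁) ^ (3 ^ ℓ) = (-c₁) ^ (3 ^ ℓ))
    (e2 : (c₁ - c₂) ^ (3 ^ ℓ) = (-c₂) ^ (3 ^ ℓ)) : False :=
  stmt1_general ℓ c₁ c₂ hne e1 e2
end

section
/- Let K be a field with a nonarchimedean absolute value |·|_v, let d > m ≥ 2, and let c₁,…,c_m ∈ K satisfy: (i) max(1,|c_i|_v) = 1 for all i, and (ii) |c_i − c_j|_v = 1 for all i < j. Let λ₁,…,λ_m ∈ K, set f(z) = z^d + λ₁z^{m−1} + ⋯ + λ_m, and A_{n,i} := f^n(c_i). Then for every n ≥ 1, max(1, |A_{n,1}|_v, …, |A_{n,m}|_v) = max(1, |λ₁|_v, …, |λ_m|_v)^{d^{n−1}}. -/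
/-!
Write `L = ‖λ‖_v`. If `‖x‖_v = R ≥ L`, every term of `f(x_i) - x_i^d` has absolute value at most
`R · R^{m-1} ≤ R^d`, so `‖f ∘ x‖_v ≤ R^d`; and if `R > 1`, a coordinate with `|x_i|_v = R` has
`|f(x_i)|_v = R^d`, because `x_i^d` strictly dominates the terms of degree `< m < d`. Hence
`‖f ∘ x‖_v = ‖x‖_v^d` whenever `‖x‖_v ≥ L`, and it remains to show `‖f ∘ c‖_v = L`. The upper bound
is the same estimate with `R = 1`. Conversely, `f(c_i) - c_i^d = ∑_j λ_j c_i^{m-1-j}` is a linear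
system for `λ` with integral matrix whose determinant, a Vandermonde determinant in the `c_i`, is a
`v`-adic unit; Cramer's rule with the integral adjugate gives `|λ_j|_v ≤ ‖f ∘ c‖_v`.
-/

section

open Matrix

variable {K : Type*} [Field K]

/-- The paper's `‖x‖_v = max(1, |x₁|_v, …, |x_k|_v)`. -/
noncomputable def maxOneNorm {ι : Type*} (v : AbsoluteValue K ℝ) (x : ι → K) : ℝ :=
  max 1 (⨆ i, v (x i))

section MaxOneNorm

variable {ι : Type*} (v : AbsoluteValue K ℝ) (x : ι → K)

theorem one_le_maxOneNorm : 1 ≤ maxOneNorm v x := le_max_left _ _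

variable [Finite ι]

theorem apply_le_maxOneNorm (i : ι) : v (x i) ≤ maxOneNorm v x :=
  (Finite.le_ciSup_of_le (f := fun i => v (x i)) i le_rfl).trans (le_max_right _ _)

theorem maxOneNorm_le_iff {B : ℝ} : maxOneNorm v x ≤ B ↔ 1 ≤ B ∧ ∀ i, v (x i) ≤ B :=
  ⟨fun h => ⟨(one_le_maxOneNorm v x).trans h, fun i => (apply_le_maxOneNorm v x i).trans h⟩,
    fun ⟨h1, h⟩ => max_le h1 (Real.iSup_le h (zero_le_one.trans h1))⟩

theorem exists_apply_eq_maxOneNorm (h : 1 < maxOneNorm v x) : ∃ i, v (x i) = maxOneNorm v x := by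
  have hsup : 1 < ⨆ i, v (x i) := by
    by_contra! hle
    exact h.ne' (max_eq_left hle)
  have : Nonempty ι := by
    by_contra! hι
    norm_num at hsup
  obtain ⟨i, hi⟩ := exists_eq_ciSup_of_finite (f := fun i => v (x i))
  exact ⟨i, by rw [maxOneNorm, max_eq_right hsup.le, hi]⟩

end MaxOneNorm

section Matrix

variable {n : Type*} [Fintype n] [DecidableEq n] {v : AbsoluteValue K ℝ}

theorem IsNonarchimedean.apply_det_le_one (hv : IsNonarchimedean v) {M : Matrix n n K}
    (hM : ∀ i j, v (M i j) ≤ 1) : v M.det ≤ 1 := by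
  rw [det_apply]
  refine hv.apply_sum_univ_le.trans (Real.iSup_le (fun σ => ?_) zero_le_one)
  rw [v.map_units_int_smul, map_prod]
  exact Finset.prod_le_one (fun _ _ => v.nonneg _) fun i _ => hM _ _

theorem IsNonarchimedean.apply_adjugate_le_one (hv : IsNonarchimedean v) {M : Matrix n n K}
    (hM : ∀ i j, v (M i j) ≤ 1) (i j : n) : v (adjugate M i j) ≤ 1 := by
  rw [adjugate_apply]
  refine hv.apply_det_le_one fun k l => ?_
  rw [updateRow_apply]
  split_ifs
  · rw [Pi.single_apply]
    split_ifs <;> simp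
  · exact hM k l

theorem IsNonarchimedean.apply_le_of_mulVec_le (hv : IsNonarchimedean v) {M : Matrix n n K}
    (hM : ∀ i j, v (M i j) ≤ 1) (hdet : v M.det = 1) {x : n → K} {B : ℝ} (hB : 0 ≤ B)
    (hb : ∀ i, v ((M *ᵥ x) i) ≤ B) (j : n) : v (x j) ≤ B := by
  have hcramer : M.det • x = adjugate M *ᵥ (M *ᵥ x) := by
    rw [mulVec_mulVec, adjugate_mul, smul_mulVec, one_mulVec]
  have hxj : M.det * x j = ∑ i, adjugate M j i * (M *ᵥ x) i := congrFun hcramer j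
  calc v (x j) = v (M.det * x j) := by rw [map_mul, hdet, one_mul]
    _ ≤ B := by
      rw [hxj]
      refine hv.apply_sum_univ_le.trans (Real.iSup_le (fun i => ?_) hB)
      rw [map_mul]
      exact (mul_le_of_le_one_left (v.nonneg _) (hv.apply_adjugate_le_one hM j i)).trans (hb i)

end Matrix

theorem AbsoluteValue.det_vandermonde_eq_one {m : ℕ} (v : AbsoluteValue K ℝ) {c : Fin m → K}
    (hc : ∀ i j, i < j → v (c i - c j) = 1) : v (vandermonde c).det = 1 := by
  rw [det_vandermonde, map_prod]
  refine Finset.prod_eq_one fun i _ => ?_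
  rw [map_prod]
  exact Finset.prod_eq_one fun j hj => by rw [v.map_sub]; exact hc i j (Finset.mem_Ioi.1 hj)

theorem AbsoluteValue.det_vandermonde_rev_eq_one {m : ℕ} (v : AbsoluteValue K ℝ) {c : Fin m → K}
    (hc : ∀ i j, i < j → v (c i - c j) = 1) :
    v (of fun i j : Fin m => c i ^ ((m - 1) - (j : ℕ))).det = 1 := by
  have hrev : (of fun i j : Fin m => c i ^ ((m - 1) - (j : ℕ)))
      = (vandermonde c).submatrix id Fin.revPerm := by
    ext i j
    simp only [of_apply, submatrix_apply, id_eq, vandermonde_apply, Fin.revPerm_apply, Fin.val_rev]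
    congr 1
    omega
  rw [hrev, det_permute', map_mul, v.det_vandermonde_eq_one hc, mul_one]
  rcases Int.units_eq_one_or (Equiv.Perm.sign (Fin.revPerm : Equiv.Perm (Fin m))) with h | h <;>
    simp [h]

/-- The paper's `f(z) = z^d + λ₁ z^{m-1} + ⋯ + λ_m`, with `λ` indexed from `0`. -/
def polyFamily {m : ℕ} (d : ℕ) (lam : Fin m → K) (x : K) : K :=
  x ^ d + ∑ j : Fin m, lam j * x ^ ((m - 1) - (j : ℕ))

section PolyFamily

variable {v : AbsoluteValue K ℝ} (hv : IsNonarchimedean v) {m : ℕ} {d : ℕ} {lam : Fin m → K}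
include hv

theorem IsNonarchimedean.apply_sum_mul_pow_le {x : K} {B R : ℝ} (hB : 0 ≤ B) (hR : 1 ≤ R)
    (hx : v x ≤ R) (hlam : ∀ j, v (lam j) ≤ B) :
    v (∑ j : Fin m, lam j * x ^ ((m - 1) - (j : ℕ))) ≤ B * R ^ (m - 1) := by
  refine hv.apply_sum_univ_le.trans (Real.iSup_le (fun j => ?_) (by positivity))
  rw [map_mul, map_pow]
  gcongr
  · exact hlam j
  · exact (pow_le_pow_left₀ (v.nonneg x) hx _).trans (pow_le_pow_right₀ hR (Nat.sub_le _ _))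

theorem IsNonarchimedean.apply_polyFamily_le {x : K} {B R : ℝ} (hB : 0 ≤ B) (hR : 1 ≤ R)
    (hx : v x ≤ R) (hlam : ∀ j, v (lam j) ≤ B) :
    v (polyFamily d lam x) ≤ max (R ^ d) (B * R ^ (m - 1)) := by
  refine (hv _ _).trans (max_le_max ?_ (hv.apply_sum_mul_pow_le hB hR hx hlam))
  rw [map_pow]
  exact pow_le_pow_left₀ (v.nonneg x) hx d

theorem IsNonarchimedean.apply_polyFamily_eq (hm : 0 < m) (hmd : m < d) {x : K} (hx : 1 < v x)
    (hlam : ∀ j, v (lam j) ≤ v x) : v (polyFamily d lam x) = v x ^ d := by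
  have htail : v (∑ j : Fin m, lam j * x ^ ((m - 1) - (j : ℕ))) < v (x ^ d) :=
    calc _ ≤ v x * v x ^ (m - 1) := hv.apply_sum_mul_pow_le (v.nonneg x) hx.le le_rfl hlam
      _ = v x ^ m := by rw [← pow_succ', Nat.sub_add_cancel hm]
      _ < v (x ^ d) := by rw [map_pow]; exact pow_lt_pow_right₀ hx hmd
  rw [polyFamily, hv.add_eq_left_of_lt htail, map_pow]

theorem IsNonarchimedean.maxOneNorm_polyFamily_comp {ι : Type*} [Finite ι] (hm : 0 < m)
    (hmd : m < d) {x : ι → K} (hlam : maxOneNorm v lam ≤ maxOneNorm v x) :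
    maxOneNorm v (fun i => polyFamily d lam (x i)) = maxOneNorm v x ^ d := by
  set R := maxOneNorm v x
  have hR : 1 ≤ R := one_le_maxOneNorm v x
  have hlamR : ∀ j, v (lam j) ≤ R := fun j => (apply_le_maxOneNorm v lam j).trans hlam
  refine le_antisymm ((maxOneNorm_le_iff v _).2 ⟨one_le_pow₀ hR, fun i => ?_⟩) ?_
  · refine (hv.apply_polyFamily_le (zero_le_one.trans hR) hR (apply_le_maxOneNorm v x i) hlamR).trans
      (max_le le_rfl ?_)
    calc R * R ^ (m - 1) = R ^ m := by rw [← pow_succ', Nat.sub_add_cancel hm]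
      _ ≤ R ^ d := pow_le_pow_right₀ hR hmd.le
  · rcases hR.eq_or_lt with hR1 | hR1
    · rw [← hR1, one_pow]
      exact one_le_maxOneNorm v _
    · obtain ⟨i, hi⟩ := exists_apply_eq_maxOneNorm v x hR1
      calc R ^ d = v (polyFamily d lam (x i)) := by
            rw [hv.apply_polyFamily_eq hm hmd (hi ▸ hR1) (hi ▸ hlamR), hi]
        _ ≤ _ := apply_le_maxOneNorm v (fun i => polyFamily d lam (x i)) i

theorem IsNonarchimedean.maxOneNorm_polyFamily_comp_eq {c : Fin m → K} (hc : ∀ i, v (c i) ≤ 1)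
    (hcc : ∀ i j, i < j → v (c i - c j) = 1) :
    maxOneNorm v (fun i => polyFamily d lam (c i)) = maxOneNorm v lam := by
  set V : Matrix (Fin m) (Fin m) K := of fun i j => c i ^ ((m - 1) - (j : ℕ))
  have hV : ∀ i j, v (V i j) ≤ 1 := fun i j => by
    simpa [V] using pow_le_one₀ (v.nonneg _) (hc i)
  have hsystem : ∀ i, (V *ᵥ lam) i = polyFamily d lam (c i) - c i ^ d := fun i => by
    simp [V, polyFamily, mulVec, dotProduct, mul_comm]
  set N := maxOneNorm v (fun i => polyFamily d lam (c i))
  have hN : 1 ≤ N := one_le_maxOneNorm v _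
  have hL : 1 ≤ maxOneNorm v lam := one_le_maxOneNorm v lam
  refine le_antisymm ((maxOneNorm_le_iff v _).2 ⟨hL, fun i => ?_⟩)
    ((maxOneNorm_le_iff v lam).2 ⟨hN, hv.apply_le_of_mulVec_le hV
      (v.det_vandermonde_rev_eq_one hcc) (zero_le_one.trans hN) fun i => ?_⟩)
  · have := hv.apply_polyFamily_le (d := d) (zero_le_one.trans hL) le_rfl (hc i)
      (apply_le_maxOneNorm v lam)
    rwa [one_pow, one_pow, mul_one, max_eq_right hL] at this
  · rw [hsystem, sub_eq_add_neg]
    refine (hv _ _).trans (max_le (apply_le_maxOneNorm v (fun i => polyFamily d lam (c i)) i) ?_)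
    rw [map_neg_eq_map, map_pow]
    exact (pow_le_one₀ (v.nonneg _) (hc i)).trans hN

end PolyFamily

end

theorem stmt9 {K : Type*} [Field K] (v : AbsoluteValue K ℝ)
    (hna : ∀ x y : K, v (x + y) ≤ max (v x) (v y))
    (d m : ℕ) (hm : 2 ≤ m) (hdm : m < d) (c lam : Fin m → K)
    (hc : ∀ i, max 1 (v (c i)) = 1)
    (hij : ∀ i j : Fin m, i < j → v (c i - c j) = 1)
    (f : K → K) (hf : f = fun x => x ^ d + ∑ j : Fin m, lam j * x ^ ((m - 1) - (j : ℕ))) :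
    ∀ n : ℕ, 1 ≤ n →
      max 1 (⨆ i, v (f^[n] (c i))) = (max 1 (⨆ i, v (lam i))) ^ (d ^ (n - 1)) := by
  have hv : IsNonarchimedean v := hna
  obtain rfl : f = polyFamily d lam := hf
  have hc1 : ∀ i, v (c i) ≤ 1 := fun i => max_eq_left_iff.mp (hc i)
  intro n hn
  change maxOneNorm v (fun i => _) = maxOneNorm v lam ^ _
  induction n, hn using Nat.le_induction with
  | base => simpa using hv.maxOneNorm_polyFamily_comp_eq hc1 hij
  | succ n hn ih =>
    have hlam : maxOneNorm v lam ≤ maxOneNorm v (fun i => (polyFamily d lam)^[n] (c i)) :=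
      ih ▸ le_self_pow₀ (one_le_maxOneNorm v lam) (pow_ne_zero _ (by omega))
    simp only [Function.iterate_succ_apply']
    rw [hv.maxOneNorm_polyFamily_comp (by omega) hdm hlam, ih, ← pow_mul, ← pow_succ,
      Nat.sub_add_cancel hn, Nat.add_sub_cancel]
end

section
/- Let d ≥ 3, let c₁ ∈ ℂ, set α := c₁ − c₁^d, β := −c₁, and g_t(x) := x^d + tx + (α + βt) ∈ ℂ[t][x]. Then for every t, g_t(c₁) = c₁ (c₁ is a fixed point of g_t), and for every c ∈ ℂ with c ≠ c₁ and every ℓ ≥ 1, the degree of g_t^ℓ(c) as a polynomial in t equals d^{ℓ−1}. -/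
open Polynomial

lemma aux_step (d : ℕ) (hd : 3 ≤ d) (p : Polynomial ℂ) (a b : ℂ)
    (hm : 1 ≤ p.natDegree) :
    (p ^ d + X * p + (C a + X * C b)).natDegree = d * p.natDegree := by
  have hp : p ≠ 0 := fun h => by simp [h] at hm
  have hpd : (p ^ d).natDegree = d * p.natDegree := by
    simp [natDegree_pow]
  have hXp : (X * p : Polynomial ℂ).natDegree = 1 + p.natDegree := by
    rw [natDegree_mul X_ne_zero hp, natDegree_X]
  have hr : (C a + X * C b : Polynomial ℂ).natDegree ≤ 1 := by
    refine (natDegree_add_le _ _).trans ?_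
    simp only [natDegree_C]
    refine max_le (by norm_num) ?_
    exact (natDegree_mul_le).trans (by simp)
  have hlt : (X * p + (C a + X * C b)).natDegree < (p ^ d).natDegree := by
    refine lt_of_le_of_lt (natDegree_add_le _ _) ?_
    rw [hpd, hXp]
    have : 1 + p.natDegree < d * p.natDegree := by nlinarith
    refine max_lt this (lt_of_le_of_lt hr ?_)
    nlinarith
  rw [add_assoc, natDegree_add_eq_left_of_natDegree_lt hlt, hpd]

theorem stmt17 (d : ℕ) (hd : 3 ≤ d) (c₁ : ℂ)
    (B : ℂ → ℕ → Polynomial ℂ)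
    (hB0 : ∀ c : ℂ, B c 0 = Polynomial.C c)
    (hBs : ∀ (c : ℂ) (n : ℕ), B c (n + 1) =
      (B c n) ^ d + Polynomial.X * (B c n) +
        (Polynomial.C (c₁ - c₁ ^ d) + Polynomial.X * Polynomial.C (-c₁))) :
    B c₁ 1 = Polynomial.C c₁ ∧
    ∀ c : ℂ, c ≠ c₁ → ∀ ℓ : ℕ, 1 ≤ ℓ → (B c ℓ).natDegree = d ^ (ℓ - 1) := by
  have hB1 : ∀ c : ℂ, B c 1 = C (c ^ d + (c₁ - c₁ ^ d)) + X * C (c - c₁) := by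
    intro c
    rw [hBs, hB0]
    simp only [← C_pow]
    ring_nf
    simp only [map_add, map_sub, map_pow, map_neg]
    ring
  constructor
  · rw [hB1]; ring_nf; simp
  · intro c hc ℓ hℓ
    obtain ⟨n, rfl⟩ := Nat.exists_eq_add_of_le hℓ
    clear hℓ
    simp only [Nat.add_sub_cancel_left] -- (1+n)-1 = n
    induction n with
    | zero =>
      simp only [pow_zero]
      rw [hB1]
      rw [add_comm]
      have : c - c₁ ≠ 0 := sub_ne_zero.mpr hc
      rw [mul_comm]
      exact natDegree_linear this
    | succ n ih =>
      have h1 : 1 ≤ (B c (1 + n)).natDegree := by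
        rw [ih]
        exact Nat.one_le_pow _ _ (by omega)
      have : 1 + (n + 1) = (1 + n) + 1 := by ring
      rw [this, hBs, aux_step d hd _ _ _ h1, ih, ← pow_succ']
end

section
/- With g_t(x) = x^d + tx + (c₁ − c₁^d − tc₁) for fixed c₁ ∈ ℂ and d ≥ 4, and c ∈ ℂ with c ≠ c₁: for every m ≥ 2, the two leading coefficients of g_t^m(c) ∈ ℂ[t] are (c − c₁)^{d^{m−1}} (in degree d^{m−1}) and d^{m−1}(c − c₁)^{d^{m−1}−1}(c^d + c₁ − c₁^d) (in degree d^{m−1} − 1). Consequently, if g_t^m(c₂) = g_t^m(c₃) as polynomials in t for c₂, c₃ ≠ c₁, then (c₂−c₁)^{d^{m−1}} = (c₃−c₁)^{d^{m−1}} and (c₂−c₁)^{d^{m−1}−1}(c₂^d+c₁−c₁^d) = (c₃−c₁)^{d^{m−1}−1}(c₃^d+c₁−c₁^d). -/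
open Polynomial

theorem stmt18_aux (d : ℕ) (hd : 4 ≤ d) (c₁ : ℂ)
    (B : ℂ → ℕ → Polynomial ℂ)
    (hB0 : ∀ c : ℂ, B c 0 = Polynomial.C c)
    (hBs : ∀ (c : ℂ) (n : ℕ), B c (n + 1) =
      (B c n) ^ d + Polynomial.X * (B c n) +
        (Polynomial.C (c₁ - c₁ ^ d) + Polynomial.X * Polynomial.C (-c₁)))
    (c : ℂ) (hc : c ≠ c₁) (k : ℕ) :
    (B c (k+1)).natDegree = d ^ k ∧
    (B c (k+1)).coeff (d ^ k) = (c - c₁) ^ (d ^ k) ∧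
    (B c (k+1)).coeff (d ^ k - 1) =
      (d : ℂ) ^ k * (c - c₁) ^ (d ^ k - 1) * (c ^ d + c₁ - c₁ ^ d) := by
  have hcc : c - c₁ ≠ 0 := sub_ne_zero.mpr hc
  induction k with
  | zero =>
    have h1 : B c 1 = C (c - c₁) * X + C (c ^ d + c₁ - c₁ ^ d) := by
      rw [hBs, hB0]
      simp only [map_sub, map_add, map_pow, map_neg]
      ring
    refine ⟨?_, ?_, ?_⟩
    · rw [h1, pow_zero, natDegree_linear hcc]
    · rw [h1, pow_zero, coeff_add, coeff_C_mul, coeff_X_one, coeff_C]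
      norm_num
    · rw [h1, pow_zero]
      simp only [Nat.sub_self, coeff_add, coeff_C_mul, coeff_X_zero, mul_zero, coeff_C]
      norm_num
  | succ k ih =>
    obtain ⟨hdeg, hlead, hnext⟩ := ih
    set P := B c (k+1) with hP
    set D := d ^ k with hD
    have hD1 : 1 ≤ D := Nat.one_le_pow _ _ (by omega)
    set a := (c - c₁) ^ D with haa
    have ha : a ≠ 0 := pow_ne_zero _ hcc
    set Q : Polynomial ℂ := C a⁻¹ * P with hQ
    have hQdeg : Q.natDegree = D := by
      rw [hQ, natDegree_C_mul (inv_ne_zero ha), hdeg]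
    have hQmonic : Q.Monic := by
      unfold Polynomial.Monic
      rw [Polynomial.leadingCoeff, hQdeg, hQ, coeff_C_mul, hlead]
      exact inv_mul_cancel₀ ha
    have hPQ : P = C a * Q := by
      rw [hQ, ← mul_assoc, ← C_mul, mul_inv_cancel₀ ha, C_1, one_mul]
    have hQd : (Q ^ d).natDegree = d * D := by
      rw [hQmonic.natDegree_pow, hQdeg]
    have hPd : (P ^ d).natDegree = d * D := by
      rw [hPQ, mul_pow, ← C_pow, natDegree_C_mul (pow_ne_zero _ ha), hQd]
    have hdD : d ^ (k+1) = d * D := by rw [pow_succ, mul_comm, hD]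
    have hDle : D + 1 + 1 < d * D := by
      have h4 : 4 * D ≤ d * D := Nat.mul_le_mul_right _ hd
      have h5 : D + 1 + 1 < 4 * D := by omega
      exact lt_of_lt_of_le h5 h4
    have hRdeg : (X * P + (C (c₁ - c₁ ^ d) + X * C (-c₁))).natDegree < d * D - 1 := by
      have h1 : (X * P).natDegree ≤ D + 1 := by
        refine natDegree_mul_le.trans ?_
        rw [natDegree_X, hdeg]
        omega
      have h2 : (C (c₁ - c₁ ^ d) + X * C (-c₁)).natDegree ≤ 1 := by
        refine (natDegree_add_le _ _).trans (max_le ?_ ?_)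
        · rw [natDegree_C]; omega
        · refine natDegree_mul_le.trans ?_
          rw [natDegree_X, natDegree_C]
      have h3 := natDegree_add_le (X * P) (C (c₁ - c₁ ^ d) + X * C (-c₁))
      have h6 : (X * P + (C (c₁ - c₁ ^ d) + X * C (-c₁))).natDegree ≤ D + 1 := by
        refine h3.trans (max_le h1 (h2.trans ?_))
        omega
      omega
    have hBsplit : B c (k+2) = P ^ d + (X * P + (C (c₁ - c₁ ^ d) + X * C (-c₁))) := by
      rw [hBs]; ring
    have hRdeg' : (X * P + (C (c₁ - c₁ ^ d) + X * C (-c₁))).natDegree < d * D :=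
      lt_of_lt_of_le hRdeg (Nat.sub_le _ _)
    have hcoefftop : (B c (k+2)).coeff (d * D) = a ^ d := by
      rw [hBsplit, coeff_add_eq_left_of_lt hRdeg', hPQ, mul_pow, ← C_pow,
        coeff_C_mul, ← hQd, ← Polynomial.leadingCoeff, (hQmonic.pow d).leadingCoeff,
        mul_one]
    have hQnext : (Q ^ d).coeff (d * D - 1) = (d : ℂ) * (a⁻¹ * P.coeff (D - 1)) := by
      rw [show d * D - 1 = (Q ^ d).natDegree - 1 by rw [hQd],
        ← nextCoeff_of_natDegree_pos (by rw [hQd]; exact Nat.mul_pos (by omega) hD1),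
        hQmonic.nextCoeff_pow,
        nextCoeff_of_natDegree_pos (by rw [hQdeg]; exact hD1), hQdeg,
        hQ, coeff_C_mul, nsmul_eq_mul]
    have hcoeffnext : (B c (k+2)).coeff (d * D - 1) =
        (d : ℂ) * a ^ (d - 1) * P.coeff (D - 1) := by
      rw [hBsplit, coeff_add_eq_left_of_lt hRdeg]
      conv_lhs => rw [hPQ, mul_pow, ← C_pow, coeff_C_mul, hQnext]
      have hpow : a ^ d * a⁻¹ = a ^ (d - 1) := by
        have h7 : a ^ d = a ^ (d - 1) * a := by
          rw [← pow_succ]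
          congr 1
          omega
        rw [h7, mul_assoc, mul_inv_cancel₀ ha, mul_one]
      calc a ^ d * ((d : ℂ) * (a⁻¹ * P.coeff (D - 1)))
          = (d : ℂ) * (a ^ d * a⁻¹) * P.coeff (D - 1) := by ring
        _ = (d : ℂ) * a ^ (d - 1) * P.coeff (D - 1) := by rw [hpow]
    have hexp : D * (d - 1) + (D - 1) = d * D - 1 := by
      rw [Nat.mul_sub_one]
      have hE : D ≤ D * d := Nat.le_mul_of_pos_right D (by omega)
      have hcomm : D * d = d * D := Nat.mul_comm D d
      omega
    refine ⟨?_, ?_, ?_⟩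
    · rw [hBsplit, natDegree_add_eq_left_of_natDegree_lt (by rw [hPd]; exact hRdeg'),
        hPd, hdD]
    · rw [hdD, hcoefftop, haa, ← pow_mul, mul_comm D d]
    · rw [hdD, hcoeffnext, hnext, haa, ← pow_mul,
        show ((d : ℂ)) ^ (k + 1) = (d : ℂ) ^ k * d from pow_succ _ _]
      calc (d : ℂ) * (c - c₁) ^ (D * (d - 1)) *
            ((d : ℂ) ^ k * (c - c₁) ^ (D - 1) * (c ^ d + c₁ - c₁ ^ d))
          = ((d : ℂ) ^ k * d) *
            ((c - c₁) ^ (D * (d - 1)) * (c - c₁) ^ (D - 1)) * (c ^ d + c₁ - c₁ ^ d) := by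
            ring
        _ = (d : ℂ) ^ k * (d : ℂ) * (c - c₁) ^ (d * D - 1) * (c ^ d + c₁ - c₁ ^ d) := by
            rw [← pow_add, hexp]

theorem stmt18 (d : ℕ) (hd : 4 ≤ d) (c₁ : ℂ)
    (B : ℂ → ℕ → Polynomial ℂ)
    (hB0 : ∀ c : ℂ, B c 0 = Polynomial.C c)
    (hBs : ∀ (c : ℂ) (n : ℕ), B c (n + 1) =
      (B c n) ^ d + Polynomial.X * (B c n) +
        (Polynomial.C (c₁ - c₁ ^ d) + Polynomial.X * Polynomial.C (-c₁)))
    (m : ℕ) (hm : 2 ≤ m) :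
    (∀ c : ℂ, c ≠ c₁ →
      (B c m).coeff (d ^ (m - 1)) = (c - c₁) ^ (d ^ (m - 1)) ∧
      (B c m).coeff (d ^ (m - 1) - 1) =
        (d : ℂ) ^ (m - 1) * (c - c₁) ^ (d ^ (m - 1) - 1) * (c ^ d + c₁ - c₁ ^ d)) ∧
    (∀ c₂ c₃ : ℂ, c₂ ≠ c₁ → c₃ ≠ c₁ → B c₂ m = B c₃ m →
      (c₂ - c₁) ^ (d ^ (m - 1)) = (c₃ - c₁) ^ (d ^ (m - 1)) ∧
      (c₂ - c₁) ^ (d ^ (m - 1) - 1) * (c₂ ^ d + c₁ - c₁ ^ d) =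
        (c₃ - c₁) ^ (d ^ (m - 1) - 1) * (c₃ ^ d + c₁ - c₁ ^ d)) := by
  obtain ⟨k, rfl⟩ : ∃ k, m = k + 1 := ⟨m - 1, by omega⟩
  have key := fun (c : ℂ) (hc : c ≠ c₁) => stmt18_aux d hd c₁ B hB0 hBs c hc k
  simp only [Nat.add_sub_cancel]
  constructor
  · intro c hc
    exact ⟨(key c hc).2.1, (key c hc).2.2⟩
  · intro c₂ c₃ h2 h3 heq
    have k2 := key c₂ h2
    have k3 := key c₃ h3
    constructor
    · rw [← k2.2.1, ← k3.2.1, heq]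
    · have h : (d : ℂ) ^ k * (c₂ - c₁) ^ (d ^ k - 1) * (c₂ ^ d + c₁ - c₁ ^ d) =
          (d : ℂ) ^ k * (c₃ - c₁) ^ (d ^ k - 1) * (c₃ ^ d + c₁ - c₁ ^ d) := by
        rw [← k2.2.2, ← k3.2.2, heq]
      have hdne : ((d : ℂ)) ^ k ≠ 0 := pow_ne_zero _ (by
        simp only [ne_eq, Nat.cast_eq_zero]; omega)
      rw [mul_assoc, mul_assoc] at h
      exact mul_left_cancel₀ hdne h
end
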